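/- Let G be a MAG over V with removable vertex X. Then for any Y, Z ∈ V\{X} and any W ⊆ V\{X,Y,Z}: if W ∪ {X} m-separates Y and Z in G, then W already m-separates Y and Z in G. -/

import Mathlib

/-- A mixed graph with directed (`dir x y` : x → y), bidirected and undirected edges. -/
structure MixedGraph (V : Type*) where
  dir : V → V → Prop
  bi : V → V → Prop
  und : V → V → Prop
  bi_symm : ∀ x y, bi x y → bi y x
  und_symm : ∀ x y, und x y → und y x

namespace MixedGraph

variable {V : Type*}

def adj (G : MixedGraph V) (x y : V) : Prop :=
  G.dir x y ∨ G.dir y x ∨ G.bi x y ∨ G.und x y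

/-- There is an arrowhead at `y` on the edge between `x` and `y`. -/
def head (G : MixedGraph V) (x y : V) : Prop := G.dir x y ∨ G.bi x y

def pa (G : MixedGraph V) (x : V) : Set V := {y | G.dir y x}
def child (G : MixedGraph V) (x : V) : Set V := {y | G.dir x y}
def nbr (G : MixedGraph V) (x : V) : Set V := {y | G.und x y}
def spouse (G : MixedGraph V) (x : V) : Set V := {y | G.bi x y}

/-- `x` is an ancestor of `y` (every vertex is an ancestor of itself). -/
def anc (G : MixedGraph V) (x y : V) : Prop := Relation.ReflTransGen G.dir x y

def ancSet (G : MixedGraph V) (S : Set V) : Set V := {x | ∃ y ∈ S, G.anc x y}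

/-- The set of descendants of `x` (including `x` itself). -/
def desc (G : MixedGraph V) (x : V) : Set V := {y | G.anc x y}

/-- A path, encoded as a duplicate-free list of at least two vertices with
consecutive vertices adjacent. -/
def IsPath (G : MixedGraph V) (p : List V) : Prop :=
  p.Chain' G.adj ∧ p.Nodup ∧ 2 ≤ p.length

def IsPathBetween (G : MixedGraph V) (p : List V) (x y : V) : Prop :=
  G.IsPath p ∧ p.head? = some x ∧ p.getLast? = some y

/-- The vertex at (internal) position `i` of `p` is a collider: both incident
path edges have an arrowhead at it. -/
def ColliderAt (G : MixedGraph V) (p : List V) (i : ℕ) : Prop :=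
  ∃ a v c, p[i-1]? = some a ∧ p[i]? = some v ∧ p[i+1]? = some c ∧
    G.head a v ∧ G.head c v

/-- A collider path: every non-endpoint vertex is a collider. -/
def IsColliderPath (G : MixedGraph V) (p : List V) : Prop :=
  G.IsPath p ∧ ∀ i, 1 ≤ i → i + 1 < p.length → G.ColliderAt p i

/-- `p` is an m-connecting path between `x` and `y` relative to `Z`. -/
def MConn (G : MixedGraph V) (p : List V) (x y : V) (Z : Set V) : Prop :=
  G.IsPathBetween p x y ∧
  ∀ i v, 1 ≤ i → i + 1 < p.length → p[i]? = some v →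
    (G.ColliderAt p i → v ∈ G.ancSet ({x, y} ∪ Z)) ∧
    (¬ G.ColliderAt p i → v ∉ Z)

/-- `Z` m-separates `x` and `y` in `G`. -/
def MSep (G : MixedGraph V) (x y : V) (Z : Set V) : Prop :=
  ∀ p, ¬ G.MConn p x y Z

/-- Induced subgraph over a set `S` of vertices. -/
def induce (G : MixedGraph V) (S : Set V) : MixedGraph V where
  dir x y := G.dir x y ∧ x ∈ S ∧ y ∈ S
  bi x y := G.bi x y ∧ x ∈ S ∧ y ∈ S
  und x y := G.und x y ∧ x ∈ S ∧ y ∈ S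
  bi_symm := fun x y h => ⟨G.bi_symm x y h.1, h.2.2, h.2.1⟩
  und_symm := fun x y h => ⟨G.und_symm x y h.1, h.2.2, h.2.1⟩

/-- `X` is removable in `G`: the induced subgraph on the remaining vertices
imposes exactly the same m-separation relations over them as `G`. -/
def Removable (G : MixedGraph V) (X : V) : Prop :=
  ∀ Y W : V, Y ≠ X → W ≠ X → Y ≠ W →
    ∀ Z : Set V, Z ⊆ {v | v ≠ X ∧ v ≠ Y ∧ v ≠ W} →
      (G.MSep Y W Z ↔ (G.induce {v | v ≠ X}).MSep Y W Z)

/-- Ancestral: no directed cycles, no almost directed cycles, and endpoints of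
undirected edges have no parents or spouses. -/
def Ancestral (G : MixedGraph V) : Prop :=
  (∀ x y, G.dir x y → ¬ G.anc y x) ∧
  (∀ x y, G.bi x y → ¬ G.anc y x) ∧
  (∀ x y, G.und x y → ∀ z, ¬ G.dir z x ∧ ¬ G.bi z x)

/-- A maximal ancestral graph: ancestral, and any two non-adjacent vertices are
m-separated by some set. -/
def IsMAG (G : MixedGraph V) : Prop :=
  G.Ancestral ∧
  ∀ x y, x ≠ y → ¬ G.adj x y →
    ∃ Z : Set V, Z ⊆ {v | v ≠ x ∧ v ≠ y} ∧ G.MSep x y Z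

/-- Markov boundary of `x`: the vertices with a collider path to `x`. -/
def Mb (G : MixedGraph V) (x : V) : Set V :=
  {y | ∃ p, G.IsColliderPath p ∧ p.head? = some y ∧ p.getLast? = some x}

/-- District of `x`: vertices joined to `x` by a path of bidirected edges. -/
def district (G : MixedGraph V) (x : V) : Set V :=
  {y | Relation.ReflTransGen G.bi x y}

/-- `Pa⁺(x) = Pa(x) ∪ Dis(x) ∪ Pa(Dis(x)) ∪ N(x)`. -/
def paPlus (G : MixedGraph V) (x : V) : Set V :=
  G.pa x ∪ G.district x ∪ (⋃ y ∈ G.district x, G.pa y) ∪ G.nbr x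

noncomputable def deltaPlus [Fintype V] (G : MixedGraph V) : ℕ :=
  Finset.univ.sup fun z : V => (G.paPlus z).ncard

/-- Condition 1 of the graphical characterization of removability. -/
def RemCond1 (G : MixedGraph V) (X : V) : Prop :=
  ∀ Y Z : V, G.adj X Y → Z ∈ G.child X ∪ G.nbr X → Z ≠ Y → G.adj Y Z

/-- Condition 2 of the graphical characterization of removability. -/
def RemCond2 (G : MixedGraph V) (X : V) : Prop :=
  ∀ (p : List V) (Y Z : V), G.IsColliderPath p → p.head? = some X →
    p.getLast? = some Y → Z ∉ p → (∀ v ∈ p.dropLast, G.dir v Z) → G.adj Y Z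

end MixedGraph

theorem List.forall_mem_of_isChain {α : Type*} {R : α → α → Prop} {P : α → Prop}
    (hR : ∀ x y, R x y → P x ∧ P y) :
    ∀ {l : List α}, l.IsChain R → 2 ≤ l.length → ∀ v ∈ l, P v
  | a :: b :: t, h, _, v, hv => by
    obtain ⟨hab, hbt⟩ := List.isChain_cons_cons.mp h
    rcases List.mem_cons.mp hv with rfl | hv
    · exact (hR _ _ hab).1
    cases t with
    | nil => rw [List.mem_singleton.mp hv]; exact (hR _ _ hab).2
    | cons c t => exact List.forall_mem_of_isChain hR hbt (by simp) v hv

namespace MixedGraph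

variable {V : Type*} {G : MixedGraph V} {S : Set V}

theorem induce_adj {x y : V} (h : (G.induce S).adj x y) : G.adj x y ∧ x ∈ S ∧ y ∈ S := by
  rcases h with h | h | h | h
  · exact ⟨Or.inl h.1, h.2⟩
  · exact ⟨Or.inr (Or.inl h.1), h.2.2, h.2.1⟩
  · exact ⟨Or.inr (Or.inr (Or.inl h.1)), h.2⟩
  · exact ⟨Or.inr (Or.inr (Or.inr h.1)), h.2⟩

theorem induce_head_iff {x y : V} (hx : x ∈ S) (hy : y ∈ S) :
    (G.induce S).head x y ↔ G.head x y := by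
  simp only [head, induce, hx, hy, and_self, and_true]

theorem anc_of_induce {x y : V} (h : (G.induce S).anc x y) : G.anc x y :=
  Relation.ReflTransGen.mono (fun _ _ h => h.1) _ _ h

theorem IsPath.of_induce {p : List V} (h : (G.induce S).IsPath p) : G.IsPath p :=
  ⟨h.1.imp fun _ _ h => (induce_adj h).1, h.2⟩

theorem IsPath.mem_of_induce {p : List V} (h : (G.induce S).IsPath p) : ∀ v ∈ p, v ∈ S :=
  List.forall_mem_of_isChain (R := (G.induce S).adj) (fun _ _ h => (induce_adj h).2) h.1 h.2.2

theorem colliderAt_induce_iff {p : List V} (hp : ∀ v ∈ p, v ∈ S) (i : ℕ) :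
    (G.induce S).ColliderAt p i ↔ G.ColliderAt p i := by
  have mem {j : ℕ} {w : V} (h : p[j]? = some w) : w ∈ S := hp w (List.mem_of_getElem? h)
  unfold ColliderAt
  exact exists₃_congr fun a v c => and_congr_right fun ha => and_congr_right fun hv =>
    and_congr_right fun hc =>
      and_congr (induce_head_iff (mem ha) (mem hv)) (induce_head_iff (mem hc) (mem hv))

-- The vertices of `Z' \ Z` lie outside `S`, so a path of `G.induce S` never visits them.
theorem MConn.of_induce {p : List V} {x y : V} {Z Z' : Set V}
    (h : (G.induce S).MConn p x y Z) (hZZ' : Z ⊆ Z') (hZ' : Z' ∩ S ⊆ Z) :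
    G.MConn p x y Z' := by
  obtain ⟨⟨hpath, hx, hy⟩, hint⟩ := h
  have hpS := hpath.mem_of_induce
  refine ⟨⟨hpath.of_induce, hx, hy⟩, fun i v hi hlt hv => ?_⟩
  rw [← colliderAt_induce_iff hpS]
  obtain ⟨hcol, hncol⟩ := hint i v hi hlt hv
  refine ⟨fun hc => ?_, fun hc hvZ' => hncol hc (hZ' ⟨hvZ', hpS v (List.mem_of_getElem? hv)⟩)⟩
  obtain ⟨w, hw, hvw⟩ := hcol hc
  exact ⟨w, Set.union_subset_union_right _ hZZ' hw, anc_of_induce hvw⟩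

theorem MSep.induce {x y : V} {Z Z' : Set V} (h : G.MSep x y Z') (hZZ' : Z ⊆ Z')
    (hZ' : Z' ∩ S ⊆ Z) : (G.induce S).MSep x y Z :=
  fun p hp => h p (hp.of_induce hZZ' hZ')

end MixedGraph

open MixedGraph in
theorem stmt10_general {V : Type*} (G : MixedGraph V) (X : V)
    (hrem : G.Removable X) (Y Z : V) (W : Set V)
    (hY : Y ≠ X) (hZ : Z ≠ X) (hYZ : Y ≠ Z)
    (hW : W ⊆ {v | v ≠ X ∧ v ≠ Y ∧ v ≠ Z})
    (hsep : G.MSep Y Z (insert X W)) :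
    G.MSep Y Z W := by
  refine (hrem Y Z hY hZ hYZ W hW).mpr (hsep.induce (Set.subset_insert X W) ?_)
  rintro v ⟨hvXW, hvX⟩
  exact (Set.mem_insert_iff.mp hvXW).resolve_left hvX

open MixedGraph in
/-- if `X` is removable in a MAG `G`, then for `Y, Z ≠ X` and
`W ⊆ V \ {X,Y,Z}`, if `W ∪ {X}` m-separates `Y` and `Z` then so does `W`. -/
theorem stmt10 {V : Type*} (G : MixedGraph V) (hG : G.IsMAG) (X : V)
    (hrem : G.Removable X) (Y Z : V) (W : Set V)
    (hY : Y ≠ X) (hZ : Z ≠ X) (hYZ : Y ≠ Z)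
    (hW : W ⊆ {v | v ≠ X ∧ v ≠ Y ∧ v ≠ Z})
    (hsep : G.MSep Y Z (insert X W)) :
    G.MSep Y Z W :=
  stmt10_general G X hrem Y Z W hY hZ hYZ hW hsep
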